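/- Let G = ⟨a, b, c ∣ a²b = ba², b²a = ab², a²c = ca², b²c = cb², a²b² = c²⟩, let p : G → W = ⟨a, b, c ∣ a² = b² = c² = 1⟩ be the canonical projection, and let ℓ_â, ℓ_b̂ : G → ℤ be the homomorphisms with ℓ_â(a) = 0, ℓ_â(b) = ℓ_â(c) = 1, ℓ_b̂(b) = 0, ℓ_b̂(a) = ℓ_b̂(c) = 1. Then for g, h ∈ G: g = h if and only if p(g) = p(h), ℓ_â(g) = ℓ_â(h), and ℓ_b̂(g) = ℓ_b̂(h). -/
import Mathlib


/-- Relations of the presentation `⟨a,b,c ∣ a²b=ba², b²a=ab², a²c=ca², b²c=cb², a²b²=c²⟩`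
of the braid group `B₂(Σ_{1,0})`, as elements of the free group on `a = 0`, `b = 1`, `c = 2`. -/
def grels : Set (FreeGroup (Fin 3)) :=
  { FreeGroup.of 0 ^ 2 * FreeGroup.of 1 * (FreeGroup.of 1 * FreeGroup.of 0 ^ 2)⁻¹,
    FreeGroup.of 1 ^ 2 * FreeGroup.of 0 * (FreeGroup.of 0 * FreeGroup.of 1 ^ 2)⁻¹,
    FreeGroup.of 0 ^ 2 * FreeGroup.of 2 * (FreeGroup.of 2 * FreeGroup.of 0 ^ 2)⁻¹,
    FreeGroup.of 1 ^ 2 * FreeGroup.of 2 * (FreeGroup.of 2 * FreeGroup.of 1 ^ 2)⁻¹,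
    FreeGroup.of 0 ^ 2 * FreeGroup.of 1 ^ 2 * (FreeGroup.of 2 ^ 2)⁻¹ }

/-- Relations `a² = b² = c² = 1` of the universal Coxeter group `W(a,b,c)`. -/
def wrels : Set (FreeGroup (Fin 3)) :=
  { FreeGroup.of 0 ^ 2, FreeGroup.of 1 ^ 2, FreeGroup.of 2 ^ 2 }

/-- The braid group `B₂(Σ_{1,0})` via the presentation above. -/
abbrev G := PresentedGroup grels

/-- The universal Coxeter group `W(a,b,c) = ℤ/2 * ℤ/2 * ℤ/2`. -/
abbrev W := PresentedGroup wrels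

def ga : G := PresentedGroup.of 0
def gb : G := PresentedGroup.of 1
def gc : G := PresentedGroup.of 2
def wa : W := PresentedGroup.of 0
def wb : W := PresentedGroup.of 1
def wc : W := PresentedGroup.of 2

namespace Stmt13Aux

lemma mk_rel {r : FreeGroup (Fin 3)} (hr : r ∈ grels) : PresentedGroup.mk grels r = 1 :=
  (QuotientGroup.eq_one_iff r).mpr (Subgroup.subset_normalClosure hr)

lemma rel1 : ga ^ 2 * gb = gb * ga ^ 2 := by
  have h := mk_rel (Set.mem_insert _ _)
  rw [map_mul, map_mul, map_inv, map_mul, map_pow] at h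
  exact mul_inv_eq_one.mp h

lemma rel2 : gb ^ 2 * ga = ga * gb ^ 2 := by
  have h := mk_rel (Set.mem_insert_of_mem _ (Set.mem_insert _ _))
  rw [map_mul, map_mul, map_inv, map_mul, map_pow] at h
  exact mul_inv_eq_one.mp h

lemma rel3 : ga ^ 2 * gc = gc * ga ^ 2 := by
  have h := mk_rel (Set.mem_insert_of_mem _ (Set.mem_insert_of_mem _ (Set.mem_insert _ _)))
  rw [map_mul, map_mul, map_inv, map_mul, map_pow] at h
  exact mul_inv_eq_one.mp h

lemma rel4 : gb ^ 2 * gc = gc * gb ^ 2 := by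
  have h := mk_rel (Set.mem_insert_of_mem _ (Set.mem_insert_of_mem _
    (Set.mem_insert_of_mem _ (Set.mem_insert _ _))))
  rw [map_mul, map_mul, map_inv, map_mul, map_pow] at h
  exact mul_inv_eq_one.mp h

lemma rel5 : ga ^ 2 * gb ^ 2 = gc ^ 2 := by
  have h := mk_rel (Set.mem_insert_of_mem _ (Set.mem_insert_of_mem _
    (Set.mem_insert_of_mem _ (Set.mem_insert_of_mem _ rfl))))
  rw [map_mul, map_mul, map_inv, map_pow, map_pow, map_pow] at h
  exact mul_inv_eq_one.mp h

lemma ga_comm (g : G) : ga ^ 2 * g = g * ga ^ 2 := by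
  have hg : g ∈ Subgroup.centralizer {ga ^ 2} := by
    refine PresentedGroup.generated_by grels _ (fun j => ?_) g
    rw [Subgroup.mem_centralizer_iff]
    rintro x rfl
    fin_cases j
    · show ga ^ 2 * ga = ga * ga ^ 2; group
    · exact rel1
    · exact rel3
  exact Subgroup.mem_centralizer_iff.mp hg _ rfl

lemma gb_comm (g : G) : gb ^ 2 * g = g * gb ^ 2 := by
  have hg : g ∈ Subgroup.centralizer {gb ^ 2} := by
    refine PresentedGroup.generated_by grels _ (fun j => ?_) g
    rw [Subgroup.mem_centralizer_iff]
    rintro x rfl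
    fin_cases j
    · exact rel2
    · show gb ^ 2 * gb = gb * gb ^ 2; group
    · exact rel4
  exact Subgroup.mem_centralizer_iff.mp hg _ rfl

/-- The central subgroup `⟨a², b²⟩`. -/
def Z : Subgroup G := Subgroup.closure {ga ^ 2, gb ^ 2}

lemma Z_le_center : Z ≤ Subgroup.center G := by
  rw [Z, Subgroup.closure_le]
  rintro x (rfl | rfl) <;> rw [SetLike.mem_coe, Subgroup.mem_center_iff] <;> intro g
  · exact (ga_comm g).symm
  · exact (gb_comm g).symm

instance Z_normal : Z.Normal := by
  constructor
  intro n hn g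
  have : g * n = n * g := (Subgroup.mem_center_iff.mp (Z_le_center hn)) g
  rw [this, mul_assoc, mul_inv_cancel, mul_one]
  exact hn

lemma p_mk (p : G →* W) (hpa : p ga = wa) (hpb : p gb = wb) (hpc : p gc = wc)
    (x : FreeGroup (Fin 3)) : p (PresentedGroup.mk grels x) = PresentedGroup.mk wrels x := by
  have : p.comp (PresentedGroup.mk grels) = PresentedGroup.mk wrels := by
    refine FreeGroup.ext_hom _ _ (fun a => ?_)
    fin_cases a
    · exact hpa
    · exact hpb
    · exact hpc
  exact DFunLike.congr_fun this x

lemma ker_in_Z (p : G →* W) (hpa : p ga = wa) (hpb : p gb = wb) (hpc : p gc = wc)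
    {k : G} (hk : p k = 1) : k ∈ Z := by
  obtain ⟨x, rfl⟩ := PresentedGroup.mk_surjective grels k
  rw [p_mk p hpa hpb hpc] at hk
  have hx : x ∈ Subgroup.normalClosure wrels := (QuotientGroup.eq_one_iff x).mp hk
  have hle : Subgroup.normalClosure wrels ≤ Z.comap (PresentedGroup.mk grels) := by
    apply Subgroup.normalClosure_le_normal
    rintro r (rfl | rfl | rfl)
    · show PresentedGroup.mk grels (FreeGroup.of 0 ^ 2) ∈ Z
      rw [map_pow]
      exact Subgroup.subset_closure (Set.mem_insert _ _)
    · show PresentedGroup.mk grels (FreeGroup.of 1 ^ 2) ∈ Z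
      rw [map_pow]
      exact Subgroup.subset_closure (Set.mem_insert_of_mem _ rfl)
    · show PresentedGroup.mk grels (FreeGroup.of 2 ^ 2) ∈ Z
      rw [map_pow]
      show gc ^ 2 ∈ Z
      rw [← rel5]
      exact mul_mem (Subgroup.subset_closure (Set.mem_insert _ _))
        (Subgroup.subset_closure (Set.mem_insert_of_mem _ rfl))
  exact hle hx

lemma Z_descr {k : G} (hk : k ∈ Z) : ∃ m n : ℤ, k = (ga ^ 2) ^ m * (gb ^ 2) ^ n := by
  refine Subgroup.closure_induction ?_ ?_ ?_ ?_ hk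
  · rintro x (rfl | rfl)
    · exact ⟨1, 0, by simp⟩
    · exact ⟨0, 1, by simp⟩
  · exact ⟨0, 0, by simp⟩
  · rintro x y _ _ ⟨m, n, rfl⟩ ⟨m', n', rfl⟩
    refine ⟨m + m', n + n', ?_⟩
    have hc : Commute ((gb ^ 2) ^ n) ((ga ^ 2) ^ m') :=
      (Commute.zpow_zpow (ga_comm (gb ^ 2)) m' n).symm
    rw [zpow_add, zpow_add, mul_assoc, ← mul_assoc ((gb ^ 2) ^ n), hc.eq,
      mul_assoc, ← mul_assoc, ← mul_assoc]
  · rintro x _ ⟨m, n, rfl⟩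
    refine ⟨-m, -n, ?_⟩
    have hc : Commute ((ga ^ 2) ^ (-m)) ((gb ^ 2) ^ (-n)) :=
      Commute.zpow_zpow (ga_comm (gb ^ 2)) _ _
    rw [mul_inv_rev, ← zpow_neg, ← zpow_neg, hc.eq]

end Stmt13Aux

theorem stmt_13 (p : G →* W) (hpa : p ga = wa) (hpb : p gb = wb) (hpc : p gc = wc)
    (ℓa ℓb : G →* Multiplicative ℤ)
    (ha0 : ℓa ga = Multiplicative.ofAdd 0) (ha1 : ℓa gb = Multiplicative.ofAdd 1)
    (ha2 : ℓa gc = Multiplicative.ofAdd 1)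
    (hb0 : ℓb gb = Multiplicative.ofAdd 0) (hb1 : ℓb ga = Multiplicative.ofAdd 1)
    (hb2 : ℓb gc = Multiplicative.ofAdd 1) (g h : G) :
    g = h ↔ p g = p h ∧ ℓa g = ℓa h ∧ ℓb g = ℓb h := by
  constructor
  · rintro rfl; exact ⟨rfl, rfl, rfl⟩
  · rintro ⟨h1, h2, h3⟩
    have hk : p (g * h⁻¹) = 1 := by rw [map_mul, map_inv, h1, mul_inv_cancel]
    obtain ⟨m, n, hmn⟩ := Stmt13Aux.Z_descr (Stmt13Aux.ker_in_Z p hpa hpb hpc hk)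
    have e2 : ℓa (g * h⁻¹) = 1 := by rw [map_mul, map_inv, h2, mul_inv_cancel]
    have e3 : ℓb (g * h⁻¹) = 1 := by rw [map_mul, map_inv, h3, mul_inv_cancel]
    rw [hmn] at e2 e3
    rw [map_mul, map_zpow, map_zpow, map_pow, map_pow, ha0, ha1] at e2
    rw [map_mul, map_zpow, map_zpow, map_pow, map_pow, hb0, hb1] at e3
    have hn : n = 0 := by
      have := congrArg Multiplicative.toAdd e2
      simpa using this
    have hm : m = 0 := by
      have := congrArg Multiplicative.toAdd e3
      simpa using this
    rw [hn, hm] at hmn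
    simp only [zpow_zero, mul_one] at hmn
    exact mul_inv_eq_one.mp hmn
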